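/- arXiv:1110.0818 — 2 statements merged into one kernel-verified Lean document; each statement's English description precedes it below -/
import Mathlib

section
/- Let n ∈ ℕ and α a partition of n. The restrictions of the irreducible characters χ^λ of S_n, for λ ≥ α, to the conjugacy classes of cycle type μ ≥ α, form a ℤ-basis for the ℤ-span of all restrictions χ^λ|_{classes ≥ α}, λ ∈ P(n). The same holds for the permutation characters ξ^λ, λ ≥ α. -/
/-!
Order the partitions of `n` lexicographically. If `g` fixes an ordered set partition of shape `λ`,
each block is a union of cycles of `g`, so the cycle type of `g` arises from `λ` by splitting parts
and is at most `λ`; and `g` fixes the ordered set partition formed by its own cycles. So the table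
`ξ^λ(μ)` is lower triangular with nonzero diagonal, while it equals `D * χ` for the upper
unitriangular `D` of `IsCharTable`. On the columns `μ ≥ α` the rows `ξ^λ` with `λ < α` vanish,
hence the rows `ξ^λ`, `λ ≥ α`, are independent and span the same lattice as all the `χ^λ`. Since
`D` maps `{λ ≥ α}` into itself, the square block of `ξ` on `{λ ≥ α}` is the corresponding block of
`D` times that of `χ`, which therefore has nonzero determinant and rows spanning the same lattice.
-/

open scoped Classical

namespace SnTable

variable {n : ℕ}

/-- The parts of a partition, listed in weakly decreasing order. -/
def descList (μ : Nat.Partition n) : List ℕ := (μ.parts.sort (· ≤ ·)).reverse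

/-- Strict lexicographic order on partitions of `n` (comparing the lists of parts
written in decreasing order). -/
def plex (μ ν : Nat.Partition n) : Prop := List.Lex (· < ·) (descList μ) (descList ν)

/-- Weak lexicographic order on partitions of `n`. -/
def plexLE (μ ν : Nat.Partition n) : Prop := μ = ν ∨ plex μ ν

/-- `a_μ = ∏ i^{m_i(μ)}`, the product of the parts of `μ`. -/
def aNum (μ : Nat.Partition n) : ℕ := μ.parts.prod

/-- `b_μ = ∏ m_i(μ)!`, the product of the factorials of the multiplicities. -/
def bNum (μ : Nat.Partition n) : ℕ :=
  ∏ i ∈ μ.parts.toFinset, (μ.parts.count i).factorial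

/-- `z_μ = a_μ b_μ`, the centralizer order of an element of cycle type `μ` in `S_n`. -/
def zNum (μ : Nat.Partition n) : ℕ := aNum μ * bNum μ

/-- The cycle type of a permutation of `Fin n`, as a partition of `n`. -/
def cycleTypePartition (g : Equiv.Perm (Fin n)) : Nat.Partition n :=
  (Fintype.card_fin n) ▸ g.partition

/-- The value at `g` of the permutation character `ξ^λ` of `S_n` obtained by inducing the
trivial character from the Young subgroup `S_λ`: it counts the ordered set partitions of
`Fin n` with block sizes `λ₁ ≥ λ₂ ≥ …` that are fixed by `g`. -/
def permChar (lam : Nat.Partition n) (g : Equiv.Perm (Fin n)) : ℕ :=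
  Fintype.card {f : Fin n → Fin (descList lam).length //
    (∀ x, f (g x) = f x) ∧
    ∀ j, (Finset.univ.filter fun x => f x = j).card = (descList lam).get j}

/-- `X` is the character table of the symmetric group `S_n`, with rows and columns indexed
by the partitions of `n`: each row is an irreducible character (as a class function, via
cycle types), distinct rows are distinct characters, and the labelling is the standard one,
pinned down by the fact that the transition matrix expressing the Young permutation
characters `ξ^λ` in terms of the rows of `X` is unitriangular with respect to the
lexicographic order. -/
def IsCharTable (X : Nat.Partition n → Nat.Partition n → ℤ) : Prop :=
  (∀ lam : Nat.Partition n, ∃ V : FDRep ℂ (Equiv.Perm (Fin n)),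
      CategoryTheory.Simple V ∧
      ∀ g : Equiv.Perm (Fin n), V.character g = (X lam (cycleTypePartition g) : ℂ)) ∧
  (∃ d : Nat.Partition n → Nat.Partition n → ℤ,
      (∀ lam, d lam lam = 1) ∧
      (∀ lam mu, d lam mu ≠ 0 → plexLE lam mu) ∧
      (∀ lam (g : Equiv.Perm (Fin n)),
        (permChar lam g : ℤ) = ∑ mu, d lam mu * X mu (cycleTypePartition g))) ∧
  Function.Injective X

end SnTable

namespace Multiset

theorem sort_ge_eq_cons {β : Type*} [LinearOrder β] {s : Multiset β} {a : β} (ha : a ∈ s)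
    (hmax : ∀ b ∈ s, b ≤ a) : s.sort (· ≥ ·) = a :: (s.erase a).sort (· ≥ ·) := by
  conv_lhs => rw [← cons_erase ha]
  exact sort_cons _ _ _ fun b hb => hmax b (mem_of_mem_erase hb)

theorem eq_singleton_of_mem_of_sum_le {s : Multiset ℕ} {a : ℕ} (hs : ∀ x ∈ s, 0 < x)
    (ha : a ∈ s) (hsum : s.sum ≤ a) : s = {a} := by
  rw [← cons_erase ha] at hsum ⊢
  rw [sum_cons] at hsum
  have hrest : ∀ x ∈ s.erase a, x = 0 := sum_eq_zero_iff.1 (by omega)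
  rw [eq_zero_of_forall_notMem fun x hx => (hs x (mem_of_mem_erase hx)).ne' (hrest x hx)]
  rfl

theorem sort_join_le_sort_map_sum (P : Multiset (Multiset ℕ)) (hP : ∀ m ∈ P, ∀ x ∈ m, 0 < x) :
    P.join.sort (· ≥ ·) ≤ (P.map sum).sort (· ≥ ·) := by
  induction P using strongInductionOn with
  | ih P ih =>
  rcases eq_or_ne P 0 with rfl | hP0
  · simp
  obtain ⟨B, hB, hBmax⟩ := exists_max_image id (map_eq_zero.not.2 hP0 : P.map sum ≠ 0)
  rw [sort_ge_eq_cons hB hBmax]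
  rcases eq_or_ne P.join 0 with hj | hj
  · rw [hj, sort_zero]
    exact (List.nil_lt_cons _ _).le
  obtain ⟨M, hM, hMmax⟩ := exists_max_image id hj
  obtain ⟨G, hGP, hMG⟩ := mem_join.1 hM
  have hGB : G.sum ≤ B := hBmax _ (mem_map_of_mem _ hGP)
  rw [sort_ge_eq_cons hM hMmax]
  rcases ((le_sum_of_mem hMG).trans hGB).lt_or_eq with hlt | rfl
  · exact (List.cons_lt_cons_iff.2 (Or.inl hlt)).le
  -- the largest part `M` is itself a largest block `G = {M}`; remove it and recurse
  obtain rfl := eq_singleton_of_mem_of_sum_le (hP G hGP) hMG hGB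
  obtain ⟨P', rfl⟩ := exists_cons_of_mem hGP
  simp only [join_cons, singleton_add, map_cons, sum_singleton, erase_cons_head]
  exact List.cons_le_cons M (ih P' (lt_cons_self _ _) fun m hm => hP m (mem_cons_of_mem hm))

theorem exists_coe_eq_and_map_eq {β γ : Type*} [DecidableEq β] {w : β → γ} :
    ∀ {m : Multiset β} {l : List γ}, m.map w = l →
      ∃ t : List β, (t : Multiset β) = m ∧ t.map w = l
  | m, [], h => ⟨[], (map_eq_zero.1 h).symm, rfl⟩
  | m, a :: l, h => by
    obtain ⟨b, hb, rfl, hl⟩ := (map_eq_cons w m l a).2 h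
    obtain ⟨t, ht, rfl⟩ := exists_coe_eq_and_map_eq hl
    exact ⟨b :: t, by rw [← cons_coe, ht, cons_erase hb], rfl⟩

end Multiset

open Finset

theorem Fintype.exists_relabel_fin {β γ : Type*} [Fintype β] [DecidableEq γ] (φ : β → γ)
    (l : List ℕ) (hl : (univ.image φ).val.map (fun b => #{x | φ x = b}) = l) :
    ∃ f : β → Fin l.length, (∀ x y, φ x = φ y → f x = f y) ∧ ∀ j, #{x | f x = j} = l.get j := by
  obtain ⟨t, ht, rfl⟩ := Multiset.exists_coe_eq_and_map_eq hl
  have hnd : t.Nodup := Multiset.coe_nodup.1 (ht ▸ (univ.image φ).nodup)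
  have hmem : ∀ x, φ x ∈ t := fun x => by
    rw [← Multiset.mem_coe, ht]
    exact mem_image_of_mem φ (mem_univ x)
  refine ⟨fun x => ⟨t.idxOf (φ x), by simpa using List.idxOf_lt_length_of_mem (hmem x)⟩,
    fun x y h => by simp [h], fun j => ?_⟩
  have hj : (j : ℕ) < t.length := by simpa using j.2
  have hfiber : ∀ x, t.idxOf (φ x) = j ↔ φ x = t[(j : ℕ)] := fun x =>
    ⟨fun h => by simp only [← h, List.getElem_idxOf], fun h => h ▸ hnd.idxOf_getElem j hj⟩
  simp only [Fin.ext_iff, hfiber, List.get_eq_getElem, List.getElem_map]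

namespace Equiv.Perm

section FiberPerm

variable {β ι : Type*} [DecidableEq ι] {g : Perm β} {f : β → ι}

def fiberPerm (g : Perm β) (f : β → ι) (hf : ∀ x, f (g x) = f x) (j : ι) : Perm β :=
  ofSubtype (g.subtypePerm (p := fun x => f x = j) fun x => by rw [hf])

theorem fiberPerm_apply (hf : ∀ x, f (g x) = f x) (j : ι) (x : β) :
    fiberPerm g f hf j x = if f x = j then g x else x := by
  by_cases h : f x = j
  · rw [if_pos h, fiberPerm, ofSubtype_apply_of_mem (p := fun x => f x = j) _ h]
    rfl
  · rw [if_neg h, fiberPerm, ofSubtype_apply_of_not_mem (p := fun x => f x = j) _ h]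

theorem pairwise_disjoint_fiberPerm (hf : ∀ x, f (g x) = f x) (s : Set ι) :
    s.Pairwise fun i j => Disjoint (fiberPerm g f hf i) (fiberPerm g f hf j) := by
  intro i _ j _ hij x
  simp only [fiberPerm_apply]
  by_cases h : f x = i
  · exact Or.inr (if_neg (h ▸ hij))
  · exact Or.inl (if_neg h)

theorem noncommProd_fiberPerm_apply (hf : ∀ x, f (g x) = f x) (s : Finset ι) (x : β) :
    s.noncommProd (fiberPerm g f hf)
      ((pairwise_disjoint_fiberPerm hf s).imp fun _ _ => Disjoint.commute) x =
      if f x ∈ s then g x else x := by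
  induction s using Finset.induction_on with
  | empty => simp [noncommProd_empty]
  | insert a s ha ih =>
    rw [noncommProd_insert_of_notMem _ _ _ _ ha, mul_apply, ih, fiberPerm_apply]
    by_cases hs : f x ∈ s
    · rw [if_pos hs, hf, if_neg (fun h : f x = a => ha (h ▸ hs)), if_pos (mem_insert_of_mem hs)]
    · rw [if_neg hs]
      by_cases h : f x = a
      · rw [if_pos h, if_pos (h ▸ mem_insert_self a s)]
      · rw [if_neg h, if_neg (by simp [hs, h])]

variable [Fintype β] [DecidableEq β] [Fintype ι]

theorem cycleType_eq_sum_fiberPerm (hf : ∀ x, f (g x) = f x) :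
    g.cycleType = ∑ j, (fiberPerm g f hf j).cycleType := by
  have hprod : univ.noncommProd (fiberPerm g f hf)
      ((pairwise_disjoint_fiberPerm hf _).imp fun _ _ => Disjoint.commute) = g := by
    ext x
    rw [noncommProd_fiberPerm_apply, if_pos (mem_univ _)]
  conv_lhs => rw [← hprod]
  exact Disjoint.cycleType_noncommProd (pairwise_disjoint_fiberPerm hf _)

theorem exists_refinement_partition (hf : ∀ x, f (g x) = f x) :
    ∃ P : Multiset (Multiset ℕ), (∀ m ∈ P, ∀ x ∈ m, 0 < x) ∧ P.join = g.partition.parts ∧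
      P.map Multiset.sum = univ.val.map fun j => #{x | f x = j} := by
  let σ : (j : ι) → Perm {x // f x = j} := fun j =>
    g.subtypePerm (p := fun x => f x = j) fun x => by rw [hf]
  refine ⟨univ.val.map fun j => (σ j).partition.parts, ?_, ?_, ?_⟩
  · simp only [Multiset.mem_map, mem_val, mem_univ, true_and, forall_exists_index]
    rintro _ j rfl x hx
    exact (σ j).partition.parts_pos hx
  · have hct : g.cycleType = ∑ j, (σ j).cycleType := by
      rw [cycleType_eq_sum_fiberPerm hf]
      exact sum_congr rfl fun j _ => cycleType_ofSubtype
    have hsum : (∑ j, (σ j).partition.parts).sum = Fintype.card β := by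
      rw [Multiset.sum_sum]
      simp only [Nat.Partition.parts_sum]
      rw [← Fintype.card_sigma, Fintype.card_congr (Equiv.sigmaFiberEquiv f)]
    obtain ⟨K, hfix⟩ : ∃ K, ∑ j, Multiset.replicate
        (Fintype.card {x // f x = j} - #(σ j).support) 1 = Multiset.replicate K 1 :=
      ⟨_, Multiset.eq_replicate_card.2 fun b hb => by
        obtain ⟨j, -, hj⟩ := Multiset.mem_sum.1 hb
        exact Multiset.eq_of_mem_replicate hj⟩
    have hg := g.partition.parts_sum
    show ∑ j, (σ j).partition.parts = _
    simp only [parts_partition, sum_add_distrib, ← hct, hfix] at hsum hg ⊢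
    simp only [Multiset.sum_add, Multiset.sum_replicate, smul_eq_mul, mul_one] at hsum hg
    -- both sides are `g.cycleType` plus some ones, and they have the same sum
    rw [show K = Fintype.card β - #g.support by omega]
  · simp only [Multiset.map_map, Function.comp_def, Nat.Partition.parts_sum, Fintype.card_subtype]

end FiberPerm

section SameCycleFinset

variable {β : Type*} [Fintype β] [DecidableEq β]

def sameCycleFinset (g : Perm β) (x : β) : Finset β := {y | g.SameCycle x y}

variable {g : Perm β}

@[simp]
theorem mem_sameCycleFinset {x y : β} : y ∈ g.sameCycleFinset x ↔ g.SameCycle x y := by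
  simp [sameCycleFinset]

theorem sameCycleFinset_apply (x : β) : g.sameCycleFinset (g x) = g.sameCycleFinset x := by
  ext y
  simp [sameCycle_apply_left]

theorem sameCycleFinset_eq_iff {x y : β} :
    g.sameCycleFinset y = g.sameCycleFinset x ↔ g.SameCycle x y := by
  refine ⟨fun h => mem_sameCycleFinset.1 (h ▸ mem_sameCycleFinset.2 (SameCycle.refl g y)),
    fun h => ?_⟩
  ext z
  simp only [mem_sameCycleFinset]
  exact ⟨h.trans, h.symm.trans⟩

theorem filter_sameCycleFinset_eq (x : β) :
    ({y | g.sameCycleFinset y = g.sameCycleFinset x} : Finset β) = g.sameCycleFinset x := by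
  ext y
  simp [sameCycleFinset_eq_iff]

theorem sameCycleFinset_of_mem_support {x : β} (hx : x ∈ g.support) :
    g.sameCycleFinset x = (g.cycleOf x).support := by
  ext y
  rw [mem_support_cycleOf_iff, mem_sameCycleFinset, and_iff_left hx]

theorem sameCycleFinset_of_notMem_support {x : β} (hx : x ∉ g.support) :
    g.sameCycleFinset x = {x} := by
  ext y
  simp only [mem_sameCycleFinset, mem_singleton]
  exact ⟨fun h => (h.eq_of_left (notMem_support.1 hx)).symm, fun h => h ▸ SameCycle.refl g x⟩

theorem image_sameCycleFinset :
    univ.image g.sameCycleFinset =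
      g.cycleFactorsFinset.image support ∪ g.supportᶜ.image singleton := by
  ext s
  simp only [mem_image, mem_univ, true_and, mem_union, mem_compl]
  constructor
  · rintro ⟨x, rfl⟩
    by_cases hx : x ∈ g.support
    · exact Or.inl ⟨g.cycleOf x, cycleOf_mem_cycleFactorsFinset_iff.2 hx,
        (sameCycleFinset_of_mem_support hx).symm⟩
    · exact Or.inr ⟨x, hx, (sameCycleFinset_of_notMem_support hx).symm⟩
  · rintro (⟨c, hc, rfl⟩ | ⟨x, hx, rfl⟩)
    · obtain ⟨x, hx⟩ := (mem_cycleFactorsFinset_iff.1 hc).1.nonempty_support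
      refine ⟨x, ?_⟩
      rw [sameCycleFinset_of_mem_support (mem_cycleFactorsFinset_support_le hc hx),
        ← cycle_is_cycleOf hx hc]
    · exact ⟨x, sameCycleFinset_of_notMem_support hx⟩

theorem injOn_support_cycleFactorsFinset :
    Set.InjOn support (g.cycleFactorsFinset : Set (Perm β)) := by
  intro c hc d hd hcd
  obtain ⟨x, hx⟩ := (mem_cycleFactorsFinset_iff.1 hc).1.nonempty_support
  rw [cycle_is_cycleOf hx hc, cycle_is_cycleOf (hcd ▸ hx) hd]

theorem map_card_image_sameCycleFinset :
    (univ.image g.sameCycleFinset).val.map card = g.partition.parts := by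
  have hdisj : _root_.Disjoint (g.cycleFactorsFinset.image support)
      (g.supportᶜ.image singleton) := by
    simp only [disjoint_left, mem_image, not_exists, not_and]
    rintro _ ⟨c, hc, rfl⟩ x - hx
    have := (mem_cycleFactorsFinset_iff.1 hc).1.two_le_card_support
    rw [← hx, card_singleton] at this
    omega
  rw [image_sameCycleFinset, ← disjUnion_eq_union _ _ hdisj, disjUnion_val, Multiset.map_add,
    image_val_of_injOn injOn_support_cycleFactorsFinset,
    image_val_of_injOn singleton_injective.injOn, Multiset.map_map, Multiset.map_map,
    parts_partition, cycleType_def]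
  simp [card_compl]

end SameCycleFinset

end Equiv.Perm

theorem Submodule.span_range_comp_subtype_val {R M ι : Type*} [Semiring R] [AddCommMonoid M]
    [Module R M] {p : ι → Prop} {v : ι → M} (hv : ∀ i, ¬ p i → v i = 0) :
    span R (Set.range fun i : Subtype p => v i) = span R (Set.range v) := by
  refine le_antisymm (span_mono (Set.range_comp_subset_range _ _)) (span_le.2 ?_)
  rintro _ ⟨i, rfl⟩
  by_cases hi : p i
  · exact subset_span ⟨⟨i, hi⟩, rfl⟩
  · rw [hv i hi]
    exact zero_mem _

namespace Matrix

open Submodule Set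

variable {R ι κ : Type*} [CommRing R]

theorem IsLowerTriangular.submatrix_row_eq_zero [LinearOrder ι] {p : ι → Prop}
    (hp : IsUpperSet {i | p i}) {M : Matrix ι ι R} (hM : M.IsLowerTriangular) {i : ι}
    (hi : ¬ p i) : M.submatrix id (Subtype.val : Subtype p → ι) i = 0 := by
  ext j
  exact hM (lt_of_not_ge fun hji => hi (hp hji j.2))

variable [Fintype ι]

theorem mul_row_mem_span (D : Matrix ι ι R) (A : Matrix ι κ R) (i : ι) :
    (D * A) i ∈ span R (range A) := by
  rw [mul_apply_eq_vecMul, vecMul_eq_sum]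
  exact sum_mem fun j _ => smul_mem _ _ (subset_span (mem_range_self j))

theorem span_range_mul_of_isUnit [DecidableEq ι] {D : Matrix ι ι R} (hD : IsUnit D)
    (A : Matrix ι κ R) : span R (range (D * A)) = span R (range A) := by
  refine le_antisymm (span_le.2 ?_) (span_le.2 ?_)
  · rintro _ ⟨i, rfl⟩
    exact mul_row_mem_span D A i
  · rintro _ ⟨i, rfl⟩
    have := mul_row_mem_span D⁻¹ (D * A) i
    rwa [nonsing_inv_mul_cancel_left D A ((isUnit_iff_isUnit_det D).1 hD)] at this

variable [LinearOrder ι]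

theorem IsUpperTriangular.isUnit_of_diag_eq_one {D : Matrix ι ι R} (hD : D.IsUpperTriangular)
    (hD1 : ∀ i, D i i = 1) : IsUnit D := by
  rw [isUnit_iff_isUnit_det, det_of_isUpperTriangular hD]
  simp [hD1]

theorem IsLowerTriangular.det_ne_zero [IsDomain R] {M : Matrix ι ι R} (hM : M.IsLowerTriangular)
    (hd : ∀ i, M i i ≠ 0) : M.det ≠ 0 := by
  rw [det_of_isLowerTriangular M hM]
  exact Finset.prod_ne_zero_iff.2 fun i _ => hd i

variable {p : ι → Prop} [DecidablePred p]

theorem IsUpperTriangular.submatrix_mul (hp : IsUpperSet {i | p i}) {D : Matrix ι ι R}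
    (hD : D.IsUpperTriangular) (A : Matrix ι κ R) :
    (D * A).submatrix Subtype.val id =
      D.submatrix (Subtype.val : Subtype p → ι) (Subtype.val : Subtype p → ι) *
        A.submatrix (Subtype.val : Subtype p → ι) id := by
  ext i k
  have hzero : ∀ j : {j // ¬ p j}, D i j * A j k = 0 := fun j => by
    rw [hD (lt_of_not_ge fun hij => j.2 (hp hij i.2)), zero_mul]
  simp only [submatrix_apply, mul_apply, id]
  rw [← Fintype.sum_subtype_add_sum_subtype p, Fintype.sum_eq_zero _ hzero, add_zero]

variable [IsDomain R] {D X : Matrix ι ι R}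

theorem linearIndependent_and_span_of_isLowerTriangular_mul (hp : IsUpperSet {i | p i})
    (hD : D.IsUpperTriangular) (hD1 : ∀ i, D i i = 1) (hDX : (D * X).IsLowerTriangular)
    (hDXd : ∀ i, (D * X) i i ≠ 0) :
    (LinearIndependent R fun i : Subtype p => fun j : Subtype p => (D * X) i j) ∧
      span R (range fun i : Subtype p => fun j : Subtype p => (D * X) i j) =
        span R (range fun i : ι => fun j : Subtype p => X i j) := by
  refine ⟨linearIndependent_rows_of_det_ne_zero
    (IsLowerTriangular.det_ne_zero hDX.submatrix fun i => hDXd i), ?_⟩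
  calc span R (range fun i : Subtype p => fun j : Subtype p => (D * X) i j)
      = span R (range fun i : ι => fun j : Subtype p => (D * X) i j) :=
        span_range_comp_subtype_val fun i hi => hDX.submatrix_row_eq_zero hp hi
    _ = span R (range fun i : ι => fun j : Subtype p => X i j) :=
        span_range_mul_of_isUnit (hD.isUnit_of_diag_eq_one hD1) (X.submatrix id Subtype.val)

theorem linearIndependent_and_span_of_isUpperTriangular (hp : IsUpperSet {i | p i})
    (hD : D.IsUpperTriangular) (hD1 : ∀ i, D i i = 1) (hDX : (D * X).IsLowerTriangular)
    (hDXd : ∀ i, (D * X) i i ≠ 0) :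
    (LinearIndependent R fun i : Subtype p => fun j : Subtype p => X i j) ∧
      span R (range fun i : Subtype p => fun j : Subtype p => X i j) =
        span R (range fun i : ι => fun j : Subtype p => X i j) := by
  let v : Subtype p → ι := Subtype.val
  have hfactor : (D * X).submatrix v v = D.submatrix v v * X.submatrix v v :=
    hD.submatrix_mul hp (X.submatrix id v)
  obtain ⟨-, hspan⟩ := linearIndependent_and_span_of_isLowerTriangular_mul hp hD hD1 hDX hDXd
  have hdet : (D.submatrix v v * X.submatrix v v).det ≠ 0 :=
    hfactor ▸ IsLowerTriangular.det_ne_zero hDX.submatrix fun i => hDXd i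
  rw [det_mul] at hdet
  refine ⟨linearIndependent_rows_of_det_ne_zero (right_ne_zero_of_mul hdet), ?_⟩
  refine le_antisymm (span_mono (by rintro _ ⟨i, rfl⟩; exact ⟨i, rfl⟩)) ?_
  rw [← hspan]
  refine span_le.2 ?_
  rintro _ ⟨i, rfl⟩
  have := mul_row_mem_span (D.submatrix v v) (X.submatrix v v) i
  rwa [← hfactor] at this

end Matrix

theorem Nat.Partition.parts_cast {m k : ℕ} (h : m = k) (p : Nat.Partition m) :
    (h ▸ p).parts = p.parts := by
  subst h
  rfl

namespace SnTable

variable {n : ℕ}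

theorem descList_eq_sort (μ : Nat.Partition n) : descList μ = μ.parts.sort (· ≥ ·) := by
  refine List.Perm.eq_of_pairwise' ?_ (Multiset.pairwise_sort _ _) ?_
  · exact List.pairwise_reverse.2 ((Multiset.pairwise_sort _ _).imp fun h => h)
  · rw [← Multiset.coe_eq_coe, Multiset.sort_eq, descList, Multiset.coe_reverse, Multiset.sort_eq]

theorem coe_descList (μ : Nat.Partition n) : (descList μ : Multiset ℕ) = μ.parts := by
  rw [descList_eq_sort, Multiset.sort_eq]

theorem descList_injective : Function.Injective (descList (n := n)) := fun μ ν h =>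
  Nat.Partition.ext (by rw [← coe_descList μ, h, coe_descList])

noncomputable instance : LinearOrder (Nat.Partition n) :=
  LinearOrder.lift' descList descList_injective

theorem plexLE_iff_le {μ ν : Nat.Partition n} : plexLE μ ν ↔ μ ≤ ν := by
  rw [plexLE, le_iff_eq_or_lt]
  rfl

theorem le_of_join_eq {μ ν : Nat.Partition n} (P : Multiset (Multiset ℕ))
    (hP : ∀ m ∈ P, ∀ x ∈ m, 0 < x) (hμ : P.join = μ.parts) (hν : P.map Multiset.sum = ν.parts) :
    μ ≤ ν := by
  show descList μ ≤ descList ν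
  rw [descList_eq_sort, descList_eq_sort, ← hμ, ← hν]
  exact Multiset.sort_join_le_sort_map_sum P hP

theorem parts_cycleTypePartition (g : Equiv.Perm (Fin n)) :
    (cycleTypePartition g).parts = g.partition.parts := by
  rw [cycleTypePartition, Nat.Partition.parts_cast]

theorem cycleTypePartition_le_of_permChar_ne_zero {lam : Nat.Partition n}
    {g : Equiv.Perm (Fin n)} (h : permChar lam g ≠ 0) : cycleTypePartition g ≤ lam := by
  obtain ⟨⟨f, hf, hcard⟩⟩ := Fintype.card_pos_iff.1 (Nat.pos_of_ne_zero h)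
  obtain ⟨P, hP, hjoin, hsum⟩ := Equiv.Perm.exists_refinement_partition hf
  refine le_of_join_eq P hP (by rw [hjoin, parts_cycleTypePartition]) ?_
  rw [hsum]
  simp only [hcard, Fin.univ_val_map, List.ofFn_get, coe_descList]

theorem permChar_ne_zero_of_cycleTypePartition_eq {lam : Nat.Partition n}
    {g : Equiv.Perm (Fin n)} (hg : cycleTypePartition g = lam) : permChar lam g ≠ 0 := by
  subst hg
  have hfibers : (Finset.univ.image g.sameCycleFinset).val.map
      (fun b => Finset.card {x | g.sameCycleFinset x = b}) = descList (cycleTypePartition g) := by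
    rw [coe_descList, parts_cycleTypePartition, ← Equiv.Perm.map_card_image_sameCycleFinset]
    refine Multiset.map_congr rfl fun b (hb : b ∈ Finset.univ.image g.sameCycleFinset) => ?_
    obtain ⟨x, -, rfl⟩ := Finset.mem_image.1 hb
    rw [Equiv.Perm.filter_sameCycleFinset_eq]
  obtain ⟨f, hf, hcard⟩ := Fintype.exists_relabel_fin _ _ hfibers
  exact (Fintype.card_pos_iff.2
    ⟨⟨f, fun x => hf _ _ (Equiv.Perm.sameCycleFinset_apply x), hcard⟩⟩).ne'

theorem isUpperSet_plexLE (α : Nat.Partition n) : IsUpperSet {lam | plexLE α lam} :=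
  fun _ _ hμν hμ => plexLE_iff_le.2 ((plexLE_iff_le.1 hμ).trans hμν)

theorem isLowerTriangular_permChar {T : Nat.Partition n → Equiv.Perm (Fin n)}
    (hT : ∀ μ, cycleTypePartition (T μ) = μ) :
    (Matrix.of fun lam μ => (permChar lam (T μ) : ℤ)).IsLowerTriangular := by
  intro lam μ hlt
  by_contra hne
  rw [Matrix.of_apply, Nat.cast_eq_zero] at hne
  exact not_le.2 hlt (hT μ ▸ cycleTypePartition_le_of_permChar_ne_zero hne)

/-- **Corollary 3.2.** For a partition `α` of `n`, the restrictions of the irreducible characters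
`χ^λ` of `S_n`, for `λ ≥ α`, to the conjugacy classes of cycle type `μ ≥ α`, form a ℤ-basis for
the ℤ-span of the restrictions of all the `χ^λ`, `λ ∈ P(n)`; and the same holds for the Young
permutation characters `ξ^λ`, `λ ≥ α`.  (Here `T` is a transversal picking a permutation of each
cycle type, used to evaluate the permutation characters on classes.) -/
theorem large_basic_sets (n : ℕ) (X : Nat.Partition n → Nat.Partition n → ℤ)
    (hX : IsCharTable X) (α : Nat.Partition n)
    (T : Nat.Partition n → Equiv.Perm (Fin n))
    (hT : ∀ μ : Nat.Partition n, cycleTypePartition (T μ) = μ)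
    (Xi : Nat.Partition n → Nat.Partition n → ℤ)
    (hXi : Xi = fun lam μ => (permChar lam (T μ) : ℤ)) :
    ((LinearIndependent ℤ fun lam : {lam : Nat.Partition n // plexLE α lam} =>
        fun μ : {μ : Nat.Partition n // plexLE α μ} => X lam.1 μ.1) ∧
      Submodule.span ℤ (Set.range fun lam : {lam : Nat.Partition n // plexLE α lam} =>
          fun μ : {μ : Nat.Partition n // plexLE α μ} => X lam.1 μ.1) =
        Submodule.span ℤ (Set.range fun lam : Nat.Partition n =>
          fun μ : {μ : Nat.Partition n // plexLE α μ} => X lam μ.1)) ∧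
    ((LinearIndependent ℤ fun lam : {lam : Nat.Partition n // plexLE α lam} =>
        fun μ : {μ : Nat.Partition n // plexLE α μ} => Xi lam.1 μ.1) ∧
      Submodule.span ℤ (Set.range fun lam : {lam : Nat.Partition n // plexLE α lam} =>
          fun μ : {μ : Nat.Partition n // plexLE α μ} => Xi lam.1 μ.1) =
        Submodule.span ℤ (Set.range fun lam : Nat.Partition n =>
          fun μ : {μ : Nat.Partition n // plexLE α μ} => X lam μ.1)) := by
  obtain ⟨-, ⟨d, hd_diag, hd_tri, hd_perm⟩, -⟩ := hX
  have hD : (Matrix.of d).IsUpperTriangular := fun lam mu hlt =>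
    by_contra fun hne => not_le.2 hlt (plexLE_iff_le.1 (hd_tri lam mu hne))
  have hXi_eq : Xi = Matrix.of d * Matrix.of X := by
    ext lam μ
    rw [hXi, Matrix.mul_apply]
    simpa [hT] using hd_perm lam (T μ)
  have hXi_tri : (Matrix.of Xi).IsLowerTriangular := hXi ▸ isLowerTriangular_permChar hT
  have hXi_diag : ∀ lam, Matrix.of Xi lam lam ≠ 0 := fun lam => by
    simpa [hXi] using permChar_ne_zero_of_cycleTypePartition_eq (hT lam)
  have hp := isUpperSet_plexLE α
  subst hXi_eq
  exact ⟨Matrix.linearIndependent_and_span_of_isUpperTriangular hp hD hd_diag hXi_tri hXi_diag,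
    Matrix.linearIndependent_and_span_of_isLowerTriangular_mul hp hD hd_diag hXi_tri hXi_diag⟩

end SnTable
end

section
/- For all k, n ∈ ℕ, ∏_{λ ∈ P(n,k)} a_λ divides ∏_{λ ∈ P(n,k)} b_λ, where P(n,k) is the set of partitions of n with all parts at most k, a_λ = ∏_i i^{m_i(λ)}, and b_λ = ∏_i m_i(λ)!. -/
open scoped Classical

namespace PartArith

/-- `a_μ = ∏ i^{m_i(μ)}`, the product of the parts of `μ`. -/
def aNum {n : ℕ} (μ : Nat.Partition n) : ℕ := μ.parts.prod

/-- `b_μ = ∏ m_i(μ)!`, the product of the factorials of the multiplicities of the parts. -/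
def bNum {n : ℕ} (μ : Nat.Partition n) : ℕ :=
  ∏ i ∈ μ.parts.toFinset, (μ.parts.count i).factorial

/-- `t_S(n)`, the number of divisors of `n` lying in `S`. -/
noncomputable def tS (S : Set ℕ) (n : ℕ) : ℕ := (n.divisors.filter (· ∈ S)).card

/-- `e_{S,p}(n) = ∑_{d ∣ n, d ∈ S} ν_p(d)`. -/
noncomputable def eS (S : Set ℕ) (p n : ℕ) : ℕ :=
  ∑ d ∈ n.divisors.filter (· ∈ S), d.factorization p

/-- `f_{S,p}(n) = |{(r, j) : r ∈ S, j ≥ 1, r·p^j ∣ n}|` (for `n ≥ 1` this set is finite and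
contained in `divisors n × [1, n]`). -/
noncomputable def fS (S : Set ℕ) (p n : ℕ) : ℕ :=
  ((n.divisors ×ˢ Finset.Icc 1 n).filter fun rj => rj.1 ∈ S ∧ rj.1 * p ^ rj.2 ∣ n).card

/-- `S` is `p`-divisible: `p·r ∈ S` (for `r ≥ 1`) implies `r ∈ S`. -/
def PDivisible (S : Set ℕ) (p : ℕ) : Prop := ∀ r : ℕ, 1 ≤ r → p * r ∈ S → r ∈ S

/-- `S` is `p`-closed: `d ∈ S` implies `p·d ∈ S`. -/
def PClosed (S : Set ℕ) (p : ℕ) : Prop := ∀ d ∈ S, p * d ∈ S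

/-- The number of partitions of `n` with all parts in `S`. -/
noncomputable def pCount (S : Set ℕ) (n : ℕ) : ℕ :=
  Fintype.card {μ : Nat.Partition n // ∀ i ∈ μ.parts, i ∈ S}

/-- `a_{P(n,S)} = ∏_{μ ∈ P(n,S)} a_μ`. -/
noncomputable def aProd (S : Set ℕ) (n : ℕ) : ℕ :=
  ∏ μ : {μ : Nat.Partition n // ∀ i ∈ μ.parts, i ∈ S}, aNum μ.1

/-- `b_{P(n,S)} = ∏_{μ ∈ P(n,S)} b_μ`. -/
noncomputable def bProd (S : Set ℕ) (n : ℕ) : ℕ :=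
  ∏ μ : {μ : Nat.Partition n // ∀ i ∈ μ.parts, i ∈ S}, bNum μ.1

/-! For a prime `p`, the `p`-adic valuation of `∏ a_μ` is `∑_{μ, i, t ≥ 1, p^t ∣ i} m_i(μ)`, while
by Legendre's formula that of `∏ b_μ` is `∑_{μ, r, t ≥ 1} ⌊m_r(μ) / p^t⌋`. Exchanging `s` parts
equal to `r p^t` for `s p^t` parts equal to `r` matches the partitions having at least `s` parts
`r p^t` with those having at least `s p^t` parts `r`; summing over `s` gives
`∑_μ m_{r p^t}(μ) = ∑_μ ⌊m_r(μ) / p^t⌋` as soon as both `r` and `r p^t` are allowed parts, which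
`p`-divisibility of the set of allowed parts guarantees. Writing `i = r p^t` then compares the two
valuations term by term. -/

open Finset

abbrev PartitionIn (S : Set ℕ) (n : ℕ) : Type := {μ : Nat.Partition n // ∀ i ∈ μ.parts, i ∈ S}

section Multiplicity

variable {n : ℕ} (μ : Nat.Partition n)

lemma count_parts_mul_le (i : ℕ) : μ.parts.count i * i ≤ n := by
  obtain ⟨rest, hrest⟩ := Multiset.le_iff_exists_add.mp
    (Multiset.le_count_iff_replicate_le.mp (le_refl (μ.parts.count i)))
  have hsum := congrArg Multiset.sum hrest
  rw [μ.parts_sum, Multiset.sum_add, Multiset.sum_replicate, smul_eq_mul] at hsum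
  omega

lemma count_parts_le {i : ℕ} (hi : 0 < i) : μ.parts.count i ≤ n :=
  (Nat.le_mul_of_pos_right _ hi).trans (count_parts_mul_le μ i)

lemma toFinset_parts_subset_Icc : μ.parts.toFinset ⊆ Icc 1 n := fun _ hi =>
  have hi := Multiset.mem_toFinset.mp hi
  mem_Icc.mpr ⟨μ.parts_pos hi, Nat.Partition.le_of_mem_parts hi⟩

lemma aNum_eq_prod_Icc : aNum μ = ∏ i ∈ Icc 1 n, i ^ μ.parts.count i := by
  rw [aNum, Finset.prod_multiset_count]
  refine prod_subset (toFinset_parts_subset_Icc μ) fun i _ hi => ?_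
  rw [Multiset.count_eq_zero.mpr (by simpa using hi), pow_zero]

lemma bNum_eq_prod_Icc : bNum μ = ∏ i ∈ Icc 1 n, (μ.parts.count i).factorial := by
  refine prod_subset (toFinset_parts_subset_Icc μ) fun i _ hi => ?_
  rw [Multiset.count_eq_zero.mpr (by simpa using hi), Nat.factorial_zero]

lemma aNum_ne_zero : aNum μ ≠ 0 :=
  Multiset.prod_ne_zero fun h => (μ.parts_pos h).ne' rfl

lemma bNum_ne_zero : bNum μ ≠ 0 :=
  prod_ne_zero_iff.mpr fun _ _ => Nat.factorial_ne_zero _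

end Multiplicity

lemma count_parts_eq_zero_of_notMem {S : Set ℕ} {n i : ℕ} (μ : PartitionIn S n) (hi : i ∉ S) :
    μ.1.parts.count i = 0 :=
  Multiset.count_eq_zero.mpr fun h => hi (μ.2 i h)

section Exchange

variable {S : Set ℕ} {n i j i' j' : ℕ}

def exchange (μ : PartitionIn S n) (hμ : j ≤ μ.1.parts.count i) (hi' : 0 < i') (hi'S : i' ∈ S)
    (h : j * i = j' * i') : PartitionIn S n where
  val :=
    { parts := μ.1.parts - .replicate j i + .replicate j' i'
      parts_pos := fun hx => (Multiset.mem_add.mp hx).elim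
        (fun hx => μ.1.parts_pos (Multiset.mem_of_le tsub_le_self hx))
        fun hx => (Multiset.eq_of_mem_replicate hx).symm ▸ hi'
      parts_sum := by
        have hsum := congrArg Multiset.sum
          (tsub_add_cancel_of_le (Multiset.le_count_iff_replicate_le.mp hμ))
        rw [Multiset.sum_add, μ.1.parts_sum, Multiset.sum_replicate, smul_eq_mul] at hsum
        rw [Multiset.sum_add, Multiset.sum_replicate, smul_eq_mul, ← h, hsum] }
  property x hx := (Multiset.mem_add.mp hx).elim
    (fun hx => μ.2 x (Multiset.mem_of_le tsub_le_self hx))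
    fun hx => (Multiset.eq_of_mem_replicate hx).symm ▸ hi'S

lemma le_count_exchange (μ : PartitionIn S n) (hμ : j ≤ μ.1.parts.count i) (hi' : 0 < i')
    (hi'S : i' ∈ S) (h : j * i = j' * i') : j' ≤ (exchange μ hμ hi' hi'S h).1.parts.count i' := by
  simp only [exchange, Multiset.count_add, Multiset.count_replicate_self, le_add_self]

lemma exchange_injective {μ ν : PartitionIn S n} (hμ : j ≤ μ.1.parts.count i)
    (hν : j ≤ ν.1.parts.count i) (hi' : 0 < i') (hi'S : i' ∈ S) (h : j * i = j' * i')
    (he : exchange μ hμ hi' hi'S h = exchange ν hν hi' hi'S h) : μ = ν := by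
  have hparts := add_right_cancel (congrArg (fun x : PartitionIn S n => x.1.parts) he)
  apply Subtype.ext
  apply Nat.Partition.ext
  rw [← tsub_add_cancel_of_le (Multiset.le_count_iff_replicate_le.mp hμ),
    ← tsub_add_cancel_of_le (Multiset.le_count_iff_replicate_le.mp hν), hparts]

lemma card_le_count_le_of_mul_eq (hi' : 0 < i') (hi'S : i' ∈ S) (h : j * i = j' * i') :
    #{μ : PartitionIn S n | j ≤ μ.1.parts.count i} ≤
      #{μ : PartitionIn S n | j' ≤ μ.1.parts.count i'} := by
  simp only [← Fintype.card_subtype]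
  exact Fintype.card_le_of_injective
    (fun μ => ⟨exchange μ.1 μ.2 hi' hi'S h, le_count_exchange μ.1 μ.2 hi' hi'S h⟩)
    fun μ ν he => Subtype.ext (exchange_injective μ.2 ν.2 hi' hi'S h (congrArg Subtype.val he))

lemma card_le_count_eq_of_mul_eq (hi : 0 < i) (hiS : i ∈ S) (hi' : 0 < i') (hi'S : i' ∈ S)
    (h : j * i = j' * i') :
    #{μ : PartitionIn S n | j ≤ μ.1.parts.count i} =
      #{μ : PartitionIn S n | j' ≤ μ.1.parts.count i'} :=
  (card_le_count_le_of_mul_eq hi' hi'S h).antisymm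
    (card_le_count_le_of_mul_eq hi hiS h.symm)

end Exchange

lemma div_eq_card_filter_mul_le {c q N : ℕ} (hq : 0 < q) (hc : c ≤ N) :
    c / q = #{s ∈ Icc 1 N | s * q ≤ c} := by
  have : {s ∈ Icc 1 N | s * q ≤ c} = Icc 1 (c / q) := by
    ext s
    simp only [mem_filter, mem_Icc, ← Nat.le_div_iff_mul_le hq]
    have := Nat.div_le_self c q
    omega
  rw [this, Nat.card_Icc, Nat.add_sub_cancel]

lemma sum_filter_dvd_le_sum_mul {M : Type*} [AddCommMonoid M] [PartialOrder M]
    [CanonicallyOrderedAdd M] (f : ℕ → M) {q : ℕ} (hq : 0 < q) (n : ℕ) :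
    ∑ i ∈ Icc 1 n with q ∣ i, f i ≤ ∑ r ∈ Icc 1 n, f (r * q) := by
  calc ∑ i ∈ Icc 1 n with q ∣ i, f i ≤ ∑ i ∈ (Icc 1 n).image (· * q), f i := by
        refine sum_le_sum_of_subset fun i hi => ?_
        obtain ⟨hi, r, rfl⟩ := mem_filter.mp hi
        obtain ⟨h1, h2⟩ := mem_Icc.mp hi
        refine mem_image.mpr ⟨r, mem_Icc.mpr ⟨Nat.pos_of_mul_pos_left h1, ?_⟩, mul_comm r q⟩
        exact (Nat.le_mul_of_pos_left r hq).trans h2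
    _ = ∑ r ∈ Icc 1 n, f (r * q) :=
        sum_image fun _ _ _ _ h => Nat.eq_of_mul_eq_mul_right hq h

section Counting

variable {S : Set ℕ} {n : ℕ}

lemma sum_count_div_eq_sum_card {i q : ℕ} (hi : 0 < i) (hq : 0 < q) :
    ∑ μ : PartitionIn S n, μ.1.parts.count i / q =
      ∑ s ∈ Icc 1 n, #{μ : PartitionIn S n | s * q ≤ μ.1.parts.count i} := by
  simp only [card_filter]
  rw [sum_comm]
  refine sum_congr rfl fun μ _ => ?_
  rw [div_eq_card_filter_mul_le hq (count_parts_le μ.1 hi), card_filter]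

theorem sum_count_mul_eq_sum_count_div {r q : ℕ} (hr : 0 < r) (hq : 0 < q) (hrS : r ∈ S)
    (hrqS : r * q ∈ S) :
    ∑ μ : PartitionIn S n, μ.1.parts.count (r * q) = ∑ μ : PartitionIn S n, μ.1.parts.count r / q := by
  have hrq : 0 < r * q := Nat.mul_pos hr hq
  have h := sum_count_div_eq_sum_card (S := S) (n := n) hrq one_pos
  simp only [Nat.div_one, mul_one] at h
  rw [h, sum_count_div_eq_sum_card hr hq]
  exact sum_congr rfl fun s _ =>
    card_le_count_eq_of_mul_eq hrq hrqS hr hrS (by ring)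

end Counting

section Valuation

variable {p n : ℕ}

lemma factorization_eq_card_pow_dvd (hp : p.Prime) {i : ℕ} (hi : 0 < i) (hin : i ≤ n) :
    i.factorization p = #{t ∈ Icc 1 n | p ^ t ∣ i} := by
  have hlt := Nat.factorization_lt p hi.ne'
  have : {t ∈ Icc 1 n | p ^ t ∣ i} = Icc 1 (i.factorization p) := by
    ext t
    simp only [mem_filter, mem_Icc, hp.pow_dvd_iff_le_factorization hi.ne']
    omega
  rw [this, Nat.card_Icc, Nat.add_sub_cancel]

lemma factorization_factorial_eq_sum (hp : p.Prime) {c : ℕ} (hc : c ≤ n) :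
    c.factorial.factorization p = ∑ t ∈ Icc 1 n, c / p ^ t := by
  have := Fact.mk hp
  rw [Nat.factorization_def _ hp, ← Finset.Ico_add_one_right_eq_Icc,
    padicValNat_factorial (((Nat.log_le_self p c).trans hc).trans_lt (Nat.lt_add_one n))]

lemma factorization_aNum (hp : p.Prime) (μ : Nat.Partition n) :
    (aNum μ).factorization p = ∑ t ∈ Icc 1 n, ∑ i ∈ Icc 1 n with p ^ t ∣ i, μ.parts.count i := by
  have hpos : ∀ i ∈ Icc 1 n, 0 < i := fun i hi => (mem_Icc.mp hi).1
  calc (aNum μ).factorization p = ∑ i ∈ Icc 1 n, μ.parts.count i * i.factorization p := by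
        rw [aNum_eq_prod_Icc, Nat.factorization_prod fun i hi => pow_ne_zero _ (hpos i hi).ne',
          Finsupp.finsetSum_apply]
        simp only [Nat.factorization_pow, Finsupp.smul_apply, smul_eq_mul]
    _ = ∑ i ∈ Icc 1 n, ∑ t ∈ Icc 1 n, if p ^ t ∣ i then μ.parts.count i else 0 :=
        sum_congr rfl fun i hi => by
          rw [factorization_eq_card_pow_dvd hp (hpos i hi) (mem_Icc.mp hi).2, card_filter, mul_sum]
          simp only [mul_ite, mul_one, mul_zero]
    _ = _ := by rw [sum_comm]; simp only [sum_filter]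

lemma factorization_bNum (hp : p.Prime) (μ : Nat.Partition n) :
    (bNum μ).factorization p = ∑ t ∈ Icc 1 n, ∑ i ∈ Icc 1 n, μ.parts.count i / p ^ t := by
  rw [bNum_eq_prod_Icc, Nat.factorization_prod fun _ _ => Nat.factorial_ne_zero _,
    Finsupp.finsetSum_apply, sum_comm]
  exact sum_congr rfl fun i hi =>
    factorization_factorial_eq_sum hp (count_parts_le μ (mem_Icc.mp hi).1)

end Valuation

section Products

variable {S : Set ℕ} {p n : ℕ}

lemma factorization_aProd (hp : p.Prime) :
    (aProd S n).factorization p =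
      ∑ t ∈ Icc 1 n, ∑ i ∈ Icc 1 n with p ^ t ∣ i, ∑ μ : PartitionIn S n, μ.1.parts.count i := by
  rw [aProd, Nat.factorization_prod fun μ _ => aNum_ne_zero μ.1, Finsupp.finsetSum_apply]
  simp only [factorization_aNum hp]
  rw [sum_comm]
  exact sum_congr rfl fun _ _ => sum_comm

lemma factorization_bProd (hp : p.Prime) :
    (bProd S n).factorization p =
      ∑ t ∈ Icc 1 n, ∑ i ∈ Icc 1 n, ∑ μ : PartitionIn S n, μ.1.parts.count i / p ^ t := by
  rw [bProd, Nat.factorization_prod fun μ _ => bNum_ne_zero μ.1, Finsupp.finsetSum_apply]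
  simp only [factorization_bNum hp]
  rw [sum_comm]
  exact sum_congr rfl fun _ _ => sum_comm

lemma PDivisible.mem_of_mul_pow_mem (hS : PDivisible S p) (hp : 0 < p) {r : ℕ} (hr : 1 ≤ r) :
    ∀ {t : ℕ}, r * p ^ t ∈ S → r ∈ S
  | 0, h => by simpa using h
  | t + 1, h => PDivisible.mem_of_mul_pow_mem hS hp hr
      (hS _ (Nat.mul_pos hr (pow_pos hp t)) (by rwa [pow_succ, ← mul_assoc, mul_comm] at h))

theorem factorization_aProd_le_factorization_bProd (hp : p.Prime) (hS : PDivisible S p) :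
    (aProd S n).factorization p ≤ (bProd S n).factorization p := by
  rw [factorization_aProd hp, factorization_bProd hp]
  refine sum_le_sum fun t _ => (sum_filter_dvd_le_sum_mul _ (pow_pos hp.pos t) n).trans <|
    sum_le_sum fun r hr => ?_
  have hr : 0 < r := (mem_Icc.mp hr).1
  by_cases hrt : r * p ^ t ∈ S
  · exact (sum_count_mul_eq_sum_count_div hr (pow_pos hp.pos t)
      (hS.mem_of_mul_pow_mem hp.pos hr hrt) hrt).le
  · simp only [count_parts_eq_zero_of_notMem _ hrt, sum_const_zero, zero_le]

theorem aProd_dvd_bProd (hS : ∀ p, p.Prime → PDivisible S p) (n : ℕ) : aProd S n ∣ bProd S n :=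
  (Nat.factorization_prime_le_iff_dvd (prod_ne_zero_iff.mpr fun μ _ => aNum_ne_zero μ.1)
    (prod_ne_zero_iff.mpr fun μ _ => bNum_ne_zero μ.1)).mp fun p hp =>
      factorization_aProd_le_factorization_bProd hp (hS p hp)

end Products

/-- **Corollary 4.5.** For all `k, n ∈ ℕ`, `a_{P(n,k)}` divides `b_{P(n,k)}`, where `P(n,k)` is
the set of partitions of `n` with all parts at most `k`. -/
theorem aProd_dvd_bProd_bounded (k n : ℕ) :
    (∏ μ : {μ : Nat.Partition n // ∀ i ∈ μ.parts, i ≤ k}, aNum μ.1) ∣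
      ∏ μ : {μ : Nat.Partition n // ∀ i ∈ μ.parts, i ≤ k}, bNum μ.1 := by
  have hS : ∀ p, p.Prime → PDivisible (Set.Iic k) p := fun p hp r _ h =>
    (Nat.le_mul_of_pos_left r hp.pos).trans h
  -- `aProd (Set.Iic k) n` carries a different (classical) `Fintype` instance
  convert aProd_dvd_bProd hS n using 1 <;>
    exact congrArg (Finset.prod · _) (congrArg (@Finset.univ _) (Subsingleton.elim _ _))

end PartArith
end
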